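/- Let m ≥ 1 be a natural number and let M be the inverse of the Riordan matrix of (1/(1+X)^m, X/(1+X)^m) over ℚ. Let P̃ be the second production matrix of M and let T be the matrix produced by P̃. Then T is the inverse of the Riordan matrix of (1/(1+X)^{2m}, X/(1+X)^{2m}). (Hence, iterating the second-production-matrix process starting from the binomial matrix (1/(1−X), X/(1−X)) = (1/(1+X), X/(1+X))⁻¹ yields the sequence of matrices (1/(1+X)^{2^j}, X/(1+X)^{2^j})⁻¹.) -/

import Mathlib

open PowerSeries Finset

/-- The Riordan matrix of the pair `(g, f)`: entries `M n k = [Xⁿ] (g * fᵏ)`. -/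
noncomputable def riordan (g f : PowerSeries ℚ) (n k : ℕ) : ℚ :=
  PowerSeries.coeff n (g * f ^ k)

namespace RiordanAux

def pmat (m j k : ℕ) : ℚ := if k ≤ j + 1 then (m.choose (j + 1 - k) : ℚ) else 0

lemma pmat_tri (m j k : ℕ) (h : j + 1 < k) : pmat m j k = 0 := by
  rw [pmat, if_neg (by omega)]

lemma vanderS (m j k : ℕ) :
    ∑ l ∈ range (j + 2), pmat m j l * pmat m l (k + 1) = pmat (2 * m) j k := by
  by_cases hk : k ≤ j + 1
  · have hnat : pmat (2 * m) j k = ∑ a ∈ range (j + 1 - k + 1),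
        (m.choose a : ℚ) * (m.choose (j + 1 - k - a)) := by
      rw [pmat, if_pos hk, two_mul, Nat.add_choose_eq,
        Finset.Nat.sum_antidiagonal_eq_sum_range_succ_mk]
      push_cast
      rfl
    rw [hnat]
    have h1 : ∑ l ∈ range (j + 2), pmat m j l * pmat m l (k + 1)
        = ∑ l ∈ Finset.Ico k (j + 2), pmat m j l * pmat m l (k + 1) := by
      refine (Finset.sum_subset ?_ ?_).symm
      · rw [Finset.range_eq_Ico]
        exact Finset.Ico_subset_Ico (by omega) le_rfl
      · intro l hl hl2
        simp only [Finset.mem_range] at hl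
        simp only [Finset.mem_Ico, not_and, not_lt] at hl2
        rw [pmat_tri m l (k + 1) (by omega), mul_zero]
    rw [h1, Finset.sum_Ico_eq_sum_range]
    have h2 : j + 2 - k = j + 1 - k + 1 := by omega
    rw [h2]
    refine Finset.sum_congr rfl fun a ha => ?_
    simp only [Finset.mem_range] at ha
    rw [pmat, pmat, if_pos (by omega), if_pos (by omega),
      show k + a + 1 - (k + 1) = a by omega, show j + 1 - (k + a) = j + 1 - k - a by omega,
      mul_comm]
  · rw [pmat, if_neg hk]
    refine Finset.sum_eq_zero fun l hl => ?_
    simp only [Finset.mem_range] at hl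
    rw [pmat_tri m l (k + 1) (by omega), mul_zero]

lemma mul_inv (m : ℕ) : ((1 + X : ℚ⟦X⟧) ^ m) * ((1 + X : ℚ⟦X⟧) ^ m)⁻¹ = 1 :=
  PowerSeries.mul_inv_cancel _ (by simp)

lemma coeff_pow_one_add_X (m n : ℕ) :
    coeff n ((1 + X : ℚ⟦X⟧) ^ m) = (m.choose n : ℚ) := by
  have h : ((1 + X : ℚ⟦X⟧)) ^ m = (((Polynomial.X + 1 : Polynomial ℚ) ^ m : Polynomial ℚ) : ℚ⟦X⟧) := by
    rw [Polynomial.coe_pow]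
    push_cast
    ring
  rw [h, Polynomial.coeff_coe, Polynomial.coeff_X_add_one_pow]

lemma riordan_eq (m k n : ℕ) :
    riordan ((1 + X) ^ m)⁻¹ (X * ((1 + X) ^ m)⁻¹) n k
      = if k ≤ n then coeff (n - k) ((((1 + X : ℚ⟦X⟧) ^ m)⁻¹) ^ (k + 1)) else 0 := by
  have h : (((1 + X : ℚ⟦X⟧) ^ m)⁻¹) * (X * ((1 + X : ℚ⟦X⟧) ^ m)⁻¹) ^ k
      = X ^ k * ((((1 + X : ℚ⟦X⟧) ^ m)⁻¹) ^ (k + 1)) := by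
    rw [mul_pow]; ring
  rw [riordan, h, PowerSeries.coeff_X_pow_mul']

lemma riordan_tri (m k n : ℕ) (h : n < k) :
    riordan ((1 + X) ^ m)⁻¹ (X * ((1 + X) ^ m)⁻¹) n k = 0 := by
  rw [riordan_eq, if_neg (by omega)]

lemma riordan_diag (m n : ℕ) :
    riordan ((1 + X) ^ m)⁻¹ (X * ((1 + X) ^ m)⁻¹) n n = 1 := by
  rw [riordan_eq, if_pos le_rfl, Nat.sub_self, PowerSeries.coeff_zero_eq_constantCoeff,
    map_pow, PowerSeries.constantCoeff_inv]
  simp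

lemma keyK (m n k : ℕ) :
    ∑ j ∈ range (n + 2), (m.choose (n + 1 - j) : ℚ) *
        riordan ((1 + X) ^ m)⁻¹ (X * ((1 + X) ^ m)⁻¹) j k
      = if k = 0 then 0 else
          riordan ((1 + X) ^ m)⁻¹ (X * ((1 + X) ^ m)⁻¹) n (k - 1) := by
  have hL : ∑ j ∈ range (n + 2), (m.choose (n + 1 - j) : ℚ) *
        riordan ((1 + X) ^ m)⁻¹ (X * ((1 + X) ^ m)⁻¹) j k
      = coeff (n + 1) ((((1 + X : ℚ⟦X⟧) ^ m)⁻¹ * (X * ((1 + X : ℚ⟦X⟧) ^ m)⁻¹) ^ k)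
          * (1 + X : ℚ⟦X⟧) ^ m) := by
    rw [PowerSeries.coeff_mul, Finset.Nat.sum_antidiagonal_eq_sum_range_succ_mk]
    refine Finset.sum_congr rfl fun j hj => ?_
    rw [coeff_pow_one_add_X, riordan, mul_comm]
  have hprod : (((1 + X : ℚ⟦X⟧) ^ m)⁻¹ * (X * ((1 + X : ℚ⟦X⟧) ^ m)⁻¹) ^ k)
          * (1 + X : ℚ⟦X⟧) ^ m = X ^ k * ((((1 + X : ℚ⟦X⟧) ^ m)⁻¹) ^ k) := by
    have h1 : (((1 + X : ℚ⟦X⟧) ^ m)⁻¹ * (X * ((1 + X : ℚ⟦X⟧) ^ m)⁻¹) ^ k)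
          * (1 + X : ℚ⟦X⟧) ^ m
        = ((1 + X : ℚ⟦X⟧) ^ m * ((1 + X : ℚ⟦X⟧) ^ m)⁻¹)
            * (X ^ k * ((((1 + X : ℚ⟦X⟧) ^ m)⁻¹) ^ k)) := by
      rw [mul_pow]; ring
    rw [h1, mul_inv, one_mul]
  rw [hL, hprod, PowerSeries.coeff_X_pow_mul']
  rcases k with _ | k'
  · simp
  · rw [if_neg (Nat.succ_ne_zero _)]
    simp only [Nat.add_sub_cancel]
    rw [riordan_eq]
    by_cases h : k' ≤ n
    · rw [if_pos (show k' + 1 ≤ n + 1 by omega), if_pos h,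
        show n + 1 - (k' + 1) = n - k' by omega]
    · rw [if_neg (show ¬ k' + 1 ≤ n + 1 by omega), if_neg h]

lemma abstract_main
    (R R' M P T p p2 : ℕ → ℕ → ℚ)
    (hRtri : ∀ n k, n < k → R n k = 0)
    (hRdiag : ∀ n, R n n = 1)
    (hR'tri : ∀ n k, n < k → R' n k = 0)
    (hR'diag : ∀ n, R' n n = 1)
    (hptri : ∀ j k, j + 1 < k → p j k = 0)
    (hp2tri : ∀ j k, j + 1 < k → p2 j k = 0)
    (hK : ∀ n k, ∑ j ∈ range (n + 2), p n j * R j k = if k = 0 then 0 else R n (k - 1))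
    (hK' : ∀ n k, ∑ j ∈ range (n + 2), p2 n j * R' j k = if k = 0 then 0 else R' n (k - 1))
    (hvan : ∀ j k, ∑ l ∈ range (j + 2), p j l * p l (k + 1) = p2 j k)
    (hM1 : ∀ n k, ∑ j ∈ range (n + 1), R n j * M j k = if n = k then 1 else 0)
    (hM2 : ∀ n k, ∑ j ∈ range (n + 1), M n j * R j k = if n = k then 1 else 0)
    (hP : ∀ n k, ∑ j ∈ range (n + 1), M n j * P j k = M (n + 2) k)
    (hT0 : ∀ k, T 0 k = if k = 0 then 1 else 0)
    (hT : ∀ n k, T (n + 1) k = ∑ j ∈ range (n + 2), T n j * P j (k + 1)) :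
    (∀ n k, ∑ j ∈ range (n + 1), T n j * R' j k = if n = k then 1 else 0)
    ∧ ∀ n k, ∑ j ∈ range (n + 1), R' n j * T j k = if n = k then 1 else 0 := by
  classical
  -- M is lower triangular with unit diagonal
  have hMtri : ∀ n, ∀ k, n < k → M n k = 0 := by
    intro n
    induction n using Nat.strong_induction_on with
    | _ n ih =>
      intro k hk
      have h1 := hM1 n k
      rw [if_neg (by omega), Finset.sum_range_succ, hRdiag n, one_mul,
        Finset.sum_eq_zero (fun j hj => by
          rw [ih j (Finset.mem_range.1 hj) k
            (by have := Finset.mem_range.1 hj; omega), mul_zero]),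
        zero_add] at h1
      exact h1
  have hMdiag : ∀ n, M n n = 1 := by
    intro n
    have h1 := hM1 n n
    rw [if_pos rfl, Finset.sum_range_succ, hRdiag n, one_mul,
      Finset.sum_eq_zero (fun j hj => by
        rw [hMtri j n (Finset.mem_range.1 hj), mul_zero]),
      zero_add] at h1
    exact h1
  -- L1 : M ⬝ p = S M
  have L1 : ∀ n k, ∑ j ∈ range (n + 1), M n j * p j k = M (n + 1) k := by
    intro n k
    have key : ∀ l ∈ range (n + 2), ∑ i ∈ range (n + 2), R l i * M i k
        = if l = k then 1 else 0 := by
      intro l hl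
      simp only [Finset.mem_range] at hl
      rw [← hM1 l k]
      refine (Finset.sum_subset (Finset.range_subset_range.2 (by omega)) ?_).symm
      intro i _ hi
      simp only [Finset.mem_range, not_lt] at hi
      rw [hRtri l i (by omega), zero_mul]
    have hKext : ∀ j, j ≤ n → ∀ i, ∑ l ∈ range (n + 2), p j l * R l i
        = if i = 0 then 0 else R j (i - 1) := by
      intro j hj i
      rw [← hK j i]
      refine (Finset.sum_subset (Finset.range_subset_range.2 (by omega)) ?_).symm
      intro l _ hl
      simp only [Finset.mem_range, not_lt] at hl
      rw [hptri j l (by omega), zero_mul]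
    have hdelta : ∀ i, (∑ j ∈ range (n + 1), M n j * (if i = 0 then (0 : ℚ) else R j (i - 1)))
        = if i = n + 1 then 1 else 0 := by
      intro i
      rcases i with _ | i
      · simp
      · have h1 : (∑ j ∈ range (n + 1), M n j * (if i + 1 = 0 then (0:ℚ) else R j (i + 1 - 1)))
            = ∑ j ∈ range (n + 1), M n j * R j i := by
          refine Finset.sum_congr rfl fun j _ => ?_
          rw [if_neg (Nat.succ_ne_zero i), Nat.add_sub_cancel]
        rw [h1, hM2 n i]
        by_cases h : n = i
        · subst h; simp
        · rw [if_neg h, if_neg (by omega)]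
    calc ∑ j ∈ range (n + 1), M n j * p j k
        = ∑ j ∈ range (n + 1), M n j * ∑ l ∈ range (n + 2), p j l * (if l = k then (1:ℚ) else 0) := by
          refine Finset.sum_congr rfl fun j hj => ?_
          simp only [Finset.mem_range] at hj
          congr 1
          symm
          simp only [mul_ite, mul_one, mul_zero, Finset.sum_ite_eq' (range (n + 2)) k]
          by_cases h : k < n + 2
          · rw [if_pos (Finset.mem_range.2 h)]
          · rw [if_neg (fun hc => h (Finset.mem_range.1 hc)), hptri j k (by omega)]
      _ = ∑ j ∈ range (n + 1), M n j * ∑ l ∈ range (n + 2), p j l * ∑ i ∈ range (n + 2), R l i * M i k := by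
          refine Finset.sum_congr rfl fun j _ => ?_
          congr 1
          exact Finset.sum_congr rfl fun l hl => by rw [key l hl]
      _ = ∑ j ∈ range (n + 1), ∑ i ∈ range (n + 2), (M n j * (if i = 0 then (0:ℚ) else R j (i - 1))) * M i k := by
          refine Finset.sum_congr rfl fun j hj => ?_
          simp only [Finset.mem_range] at hj
          simp only [Finset.mul_sum]
          rw [Finset.sum_comm]
          refine Finset.sum_congr rfl fun i _ => ?_
          rw [← hKext j (by omega) i, Finset.mul_sum, Finset.sum_mul]
          refine Finset.sum_congr rfl fun l _ => by ring
      _ = ∑ i ∈ range (n + 2), (∑ j ∈ range (n + 1), M n j * (if i = 0 then (0:ℚ) else R j (i - 1))) * M i k := by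
          rw [Finset.sum_comm]
          exact Finset.sum_congr rfl fun i _ => (Finset.sum_mul _ _ _).symm
      _ = ∑ i ∈ range (n + 2), (if i = n + 1 then (1:ℚ) else 0) * M i k := by
          exact Finset.sum_congr rfl fun i _ => by rw [hdelta i]
      _ = M (n + 1) k := by
          simp only [ite_mul, one_mul, zero_mul, Finset.sum_ite_eq' (range (n + 2)) (n + 1)]
          rw [if_pos (Finset.mem_range.2 (by omega))]
  -- L2 : M ⬝ (p ⬝ p) = S² M
  have L2 : ∀ n k, ∑ j ∈ range (n + 1), M n j * (∑ l ∈ range (j + 2), p j l * p l k)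
      = M (n + 2) k := by
    intro n k
    calc ∑ j ∈ range (n + 1), M n j * (∑ l ∈ range (j + 2), p j l * p l k)
        = ∑ j ∈ range (n + 1), M n j * (∑ l ∈ range (n + 2), p j l * p l k) := by
          refine Finset.sum_congr rfl fun j hj => ?_
          simp only [Finset.mem_range] at hj
          congr 1
          refine Finset.sum_subset (Finset.range_subset_range.2 (by omega)) ?_
          intro l _ hl
          simp only [Finset.mem_range, not_lt] at hl
          rw [hptri j l (by omega), zero_mul]
      _ = ∑ l ∈ range (n + 2), (∑ j ∈ range (n + 1), M n j * p j l) * p l k := by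
          simp only [Finset.mul_sum]
          rw [Finset.sum_comm]
          refine Finset.sum_congr rfl fun l _ => ?_
          rw [Finset.sum_mul]
          exact Finset.sum_congr rfl fun j _ => by ring
      _ = ∑ l ∈ range (n + 2), M (n + 1) l * p l k := by
          exact Finset.sum_congr rfl fun l _ => by rw [L1 n l]
      _ = M (n + 2) k := L1 (n + 1) k
  -- P is determined
  have hPeq : ∀ n, ∀ k, P n k = ∑ l ∈ range (n + 2), p n l * p l k := by
    intro n
    induction n using Nat.strong_induction_on with
    | _ n ih =>
      intro k
      have e1 : ∑ j ∈ range (n + 1), M n j * P j k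
          = ∑ j ∈ range (n + 1), M n j * (∑ l ∈ range (j + 2), p j l * p l k) :=
        (hP n k).trans (L2 n k).symm
      rw [Finset.sum_range_succ, Finset.sum_range_succ,
        show ∑ j ∈ range n, M n j * P j k
            = ∑ j ∈ range n, M n j * (∑ l ∈ range (j + 2), p j l * p l k) from
          Finset.sum_congr rfl fun j hj => by rw [ih j (Finset.mem_range.1 hj) k]] at e1
      have e2 := add_left_cancel e1
      rwa [hMdiag n, one_mul, one_mul] at e2
  -- T recurrence with explicit p2
  have hTrec : ∀ n k, T (n + 1) k = ∑ j ∈ range (n + 2), T n j * p2 j k := by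
    intro n k
    rw [hT n k]
    exact Finset.sum_congr rfl fun j _ => by rw [hPeq j (k + 1), hvan j k]
  -- T is lower triangular
  have hTtri : ∀ n k, n < k → T n k = 0 := by
    intro n
    induction n with
    | zero => intro k hk; rw [hT0, if_neg (by omega)]
    | succ n ih =>
      intro k hk
      rw [hTrec n k]
      refine Finset.sum_eq_zero fun j hj => ?_
      simp only [Finset.mem_range] at hj
      by_cases h : j ≤ n
      · rw [hp2tri j k (by omega), mul_zero]
      · rw [ih j (by omega), zero_mul]
  -- first side : T ⬝ R' = I
  have Hside : ∀ n k, ∑ j ∈ range (n + 1), T n j * R' j k = if n = k then 1 else 0 := by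
    intro n
    induction n with
    | zero =>
      intro k
      rw [Finset.sum_range_one, hT0, if_pos rfl, one_mul]
      rcases k with _ | k
      · rw [hR'diag 0, if_pos rfl]
      · rw [hR'tri 0 (k + 1) (by omega), if_neg (by omega)]
    | succ n ih =>
      intro k
      have hKext' : ∀ l, l ≤ n → ∑ j ∈ range (n + 2), p2 l j * R' j k
          = if k = 0 then 0 else R' l (k - 1) := by
        intro l hl
        rw [← hK' l k]
        refine (Finset.sum_subset (Finset.range_subset_range.2 (by omega)) ?_).symm
        intro j _ hj
        simp only [Finset.mem_range, not_lt] at hj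
        rw [hp2tri l j (by omega), zero_mul]
      calc ∑ j ∈ range (n + 2), T (n + 1) j * R' j k
          = ∑ j ∈ range (n + 2), (∑ l ∈ range (n + 2), T n l * p2 l j) * R' j k := by
            exact Finset.sum_congr rfl fun j _ => by rw [hTrec n j]
        _ = ∑ l ∈ range (n + 2), T n l * ∑ j ∈ range (n + 2), p2 l j * R' j k := by
            simp only [Finset.sum_mul, Finset.mul_sum]
            rw [Finset.sum_comm]
            exact Finset.sum_congr rfl fun l _ => Finset.sum_congr rfl fun j _ => by ring
        _ = ∑ l ∈ range (n + 1), T n l * (if k = 0 then (0:ℚ) else R' l (k - 1)) := by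
            rw [Finset.sum_range_succ, hTtri n (n + 1) (by omega), zero_mul, add_zero]
            refine Finset.sum_congr rfl fun l hl => ?_
            rw [hKext' l (by have := Finset.mem_range.1 hl; omega)]
        _ = if n + 1 = k then 1 else 0 := by
            rcases k with _ | k
            · simp
            · have h1 : ∑ l ∈ range (n + 1), T n l * (if k + 1 = 0 then (0:ℚ) else R' l (k + 1 - 1))
                  = ∑ l ∈ range (n + 1), T n l * R' l k := by
                refine Finset.sum_congr rfl fun l _ => ?_
                rw [if_neg (Nat.succ_ne_zero k), Nat.add_sub_cancel]
              rw [h1, ih k]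
              by_cases h : n = k
              · subst h; simp
              · rw [if_neg h, if_neg (by omega)]
  -- auxiliary : (R' ⬝ T) ⬝ R' = R'
  have W : ∀ n k, ∑ j ∈ range (n + 1), (∑ i ∈ range (n + 1), R' n i * T i j) * R' j k
      = R' n k := by
    intro n k
    calc ∑ j ∈ range (n + 1), (∑ i ∈ range (n + 1), R' n i * T i j) * R' j k
        = ∑ i ∈ range (n + 1), R' n i * ∑ j ∈ range (n + 1), T i j * R' j k := by
          simp only [Finset.sum_mul, Finset.mul_sum]
          rw [Finset.sum_comm]
          exact Finset.sum_congr rfl fun i _ => Finset.sum_congr rfl fun j _ => by ring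
      _ = ∑ i ∈ range (n + 1), R' n i * (if i = k then (1:ℚ) else 0) := by
          refine Finset.sum_congr rfl fun i hi => ?_
          simp only [Finset.mem_range] at hi
          congr 1
          rw [← Hside i k]
          exact (Finset.sum_subset (Finset.range_subset_range.2 (by omega)) (fun j _ hj => by
            simp only [Finset.mem_range, not_lt] at hj
            rw [hTtri i j (by omega), zero_mul])).symm
      _ = R' n k := by
          simp only [mul_ite, mul_one, mul_zero, Finset.sum_ite_eq' (range (n + 1)) k]
          by_cases h : k < n + 1
          · rw [if_pos (Finset.mem_range.2 h)]
          · rw [if_neg (fun hc => h (Finset.mem_range.1 hc)), hR'tri n k (by omega)]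
  -- second side : R' ⬝ T = I
  have Uval : ∀ n k, ∑ j ∈ range (n + 1), R' n j * T j k = if n = k then 1 else 0 := by
    intro n
    have base : ∀ k, n ≤ k → ∑ j ∈ range (n + 1), R' n j * T j k = if n = k then 1 else 0 := by
      intro k hk
      by_cases h : n = k
      · subst h
        have hw := W n n
        rw [Finset.sum_range_succ, hR'diag n, mul_one,
          Finset.sum_eq_zero (fun j hj => by
            rw [hR'tri j n (Finset.mem_range.1 hj), mul_zero]),
          zero_add] at hw
        rw [hw, if_pos rfl]
      · rw [if_neg h]
        refine Finset.sum_eq_zero fun j hj => ?_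
        simp only [Finset.mem_range] at hj
        rw [hTtri j k (by omega), mul_zero]
    have main : ∀ d, ∀ k, n ≤ k + d → ∑ j ∈ range (n + 1), R' n j * T j k = if n = k then 1 else 0 := by
      intro d
      induction d with
      | zero => intro k hk; exact base k (by omega)
      | succ d ihd =>
        intro k hk
        by_cases hkn : n ≤ k
        · exact base k hkn
        · have hw := W n k
          rw [Finset.sum_range_succ, ihd n (by omega), if_pos rfl, one_mul,
            Finset.sum_eq_single_of_mem k (Finset.mem_range.2 (by omega))
              (fun j hj hjk => by
                simp only [Finset.mem_range] at hj
                rcases lt_or_gt_of_ne hjk with h1 | h1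
                · rw [hR'tri j k h1, mul_zero]
                · rw [ihd j (by omega), if_neg (by omega), zero_mul]),
            hR'diag k, mul_one] at hw
          have h0 : (∑ i ∈ range (n + 1), R' n i * T i k) = 0 := by linarith
          rw [h0, if_neg (by omega)]
    intro k
    exact main n k (by omega)
  exact ⟨Hside, Uval⟩

end RiordanAux

theorem iterated_second_production_doubling
    (m : ℕ) (hm : 1 ≤ m)
    (M P T : ℕ → ℕ → ℚ)
    (hM1 : ∀ n k, ∑ j ∈ range (n + 1),
        riordan ((1 + X) ^ m)⁻¹ (X * ((1 + X) ^ m)⁻¹) n j * M j k = if n = k then 1 else 0)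
    (hM2 : ∀ n k, ∑ j ∈ range (n + 1),
        M n j * riordan ((1 + X) ^ m)⁻¹ (X * ((1 + X) ^ m)⁻¹) j k = if n = k then 1 else 0)
    (hP : ∀ n k, ∑ j ∈ range (n + 1), M n j * P j k = M (n + 2) k)
    (hT0 : ∀ k, T 0 k = if k = 0 then 1 else 0)
    (hT : ∀ n k, T (n + 1) k = ∑ j ∈ range (n + 2), T n j * P j (k + 1)) :
    (∀ n k, ∑ j ∈ range (n + 1),
        T n j * riordan ((1 + X) ^ (2 * m))⁻¹ (X * ((1 + X) ^ (2 * m))⁻¹) j k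
      = if n = k then 1 else 0)
    ∧ ∀ n k, ∑ j ∈ range (n + 1),
        riordan ((1 + X) ^ (2 * m))⁻¹ (X * ((1 + X) ^ (2 * m))⁻¹) n j * T j k
      = if n = k then 1 else 0 := by
  have hKm : ∀ n k, ∑ j ∈ range (n + 2), RiordanAux.pmat m n j *
      riordan ((1 + X) ^ m)⁻¹ (X * ((1 + X) ^ m)⁻¹) j k
      = if k = 0 then 0 else riordan ((1 + X) ^ m)⁻¹ (X * ((1 + X) ^ m)⁻¹) n (k - 1) := by
    intro n k
    rw [← RiordanAux.keyK m n k]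
    refine Finset.sum_congr rfl fun j hj => ?_
    simp only [Finset.mem_range] at hj
    rw [RiordanAux.pmat, if_pos (by omega)]
  have hK2m : ∀ n k, ∑ j ∈ range (n + 2), RiordanAux.pmat (2 * m) n j *
      riordan ((1 + X) ^ (2 * m))⁻¹ (X * ((1 + X) ^ (2 * m))⁻¹) j k
      = if k = 0 then 0 else riordan ((1 + X) ^ (2 * m))⁻¹ (X * ((1 + X) ^ (2 * m))⁻¹) n (k - 1) := by
    intro n k
    rw [← RiordanAux.keyK (2 * m) n k]
    refine Finset.sum_congr rfl fun j hj => ?_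
    simp only [Finset.mem_range] at hj
    rw [RiordanAux.pmat, if_pos (by omega)]
  exact RiordanAux.abstract_main
    (riordan ((1 + X) ^ m)⁻¹ (X * ((1 + X) ^ m)⁻¹))
    (riordan ((1 + X) ^ (2 * m))⁻¹ (X * ((1 + X) ^ (2 * m))⁻¹))
    M P T (RiordanAux.pmat m) (RiordanAux.pmat (2 * m))
    (fun n k h => RiordanAux.riordan_tri m k n h)
    (RiordanAux.riordan_diag m)
    (fun n k h => RiordanAux.riordan_tri (2 * m) k n h)
    (RiordanAux.riordan_diag (2 * m))
    (RiordanAux.pmat_tri m)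
    (RiordanAux.pmat_tri (2 * m))
    hKm hK2m
    (RiordanAux.vanderS m)
    hM1 hM2 hP hT0 hT
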